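/- Let (X, σ_X) be a finitely irreducible countable Markov shift, (Y, σ_Y) a subshift on a countable alphabet, and π : X → Y a one-block factor map with |π^{-1}(i)| < ∞ for each symbol i. Then Φ = {log φ_n}_{n≥1}, where φ_n(y) = |π^{-1}(y_1…y_n)|, is a Bowen sequence on Y satisfying (C1), (C2) and (C3); moreover, if W_1 is a finite set witnessing the finite irreducibility of X and π(W_1) = {π(w) : w ∈ W_1}, then for any u ∈ B_n(Y), v ∈ B_m(Y) there exists w' ∈ π(W_1) such that |π^{-1}(u w' v)| ≥ (1/|W_1|) |π^{-1}(u)| |π^{-1}(v)|. -/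

import Mathlib

open Filter Topology MeasureTheory
open scoped ENNReal

namespace CSS

/-- The full shift space over the countable alphabet `ℕ`. -/
abbrev FullShift : Type := ℕ → ℕ

/-- The (one-sided) shift map. -/
def shift : FullShift → FullShift := fun x n => x (n + 1)

/-- The cylinder set determined by a word. -/
def cyl (w : List ℕ) : Set FullShift := {x | ∀ i : Fin w.length, x i.1 = w.get i}

/-- A subshift on a countable alphabet: a closed, shift-invariant subset of the full shift. -/
def IsSubshift (X : Set FullShift) : Prop := IsClosed X ∧ shift '' X ⊆ X

/-- The word `w` is allowable for `X` (the cylinder of `w` meets `X`). -/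
def Allow (X : Set FullShift) (w : List ℕ) : Prop := ∃ x ∈ X, x ∈ cyl w

/-- A word is allowed by a transition matrix `t`. -/
def WordAllowed (t : ℕ → ℕ → Prop) (w : List ℕ) : Prop :=
  ∀ i : ℕ, ∀ h : i + 1 < w.length, t (w.get ⟨i, Nat.lt_of_succ_lt h⟩) (w.get ⟨i + 1, h⟩)

/-- The countable Markov shift determined by the transition matrix `t`. -/
def markov (t : ℕ → ℕ → Prop) : Set FullShift := {x | ∀ n, t (x n) (x (n + 1))}

/-- The transition matrix has no row and no column made entirely of zeros. -/
def NoZeroRowCol (t : ℕ → ℕ → Prop) : Prop := (∀ i, ∃ j, t i j) ∧ (∀ j, ∃ i, t i j)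

/-- The Markov shift of `t` restricted to the symbols `< N`. -/
def markovRestr (t : ℕ → ℕ → Prop) (N : ℕ) : Set FullShift :=
  {x | (∀ n, t (x n) (x (n + 1))) ∧ ∀ n, x n < N}

/-- The restriction of `t` to the symbols `< N` is an irreducible matrix. -/
def MatIrred (t : ℕ → ℕ → Prop) (N : ℕ) : Prop :=
  ∀ i < N, ∀ j < N, ∃ w : List ℕ, (∀ a ∈ w, a < N) ∧ WordAllowed t ([i] ++ w ++ [j])

/-- A subshift is irreducible. -/
def Irreducible (X : Set FullShift) : Prop :=
  ∀ u v, Allow X u → Allow X v → ∃ w, Allow X (u ++ w ++ v)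

/-- The weak specification property. -/
def WeakSpec (X : Set FullShift) : Prop :=
  ∃ p : ℕ, ∀ u v, Allow X u → Allow X v → ∃ w, w.length ≤ p ∧ Allow X (u ++ w ++ v)

/-- A subshift is finitely irreducible. -/
def FinIrreducible (X : Set FullShift) : Prop :=
  ∃ (p : ℕ) (W : Finset (List ℕ)), (∀ w ∈ W, w.length ≤ p ∧ Allow X w) ∧
    ∀ u v, Allow X u → Allow X v → ∃ w ∈ W, Allow X (u ++ w ++ v)

/-- A countable Markov shift (given by its matrix) is topologically mixing. -/
def TopMixingT (t : ℕ → ℕ → Prop) : Prop :=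
  ∀ a b : ℕ, ∃ N : ℕ, ∀ n > N, ∃ w : List ℕ, w.length = n ∧ WordAllowed t w ∧
    w.head? = some a ∧ w.getLast? = some b

/-- The big images and preimages property. -/
def BIP (t : ℕ → ℕ → Prop) : Prop :=
  ∃ S : Finset ℕ, ∀ a : ℕ, (∃ b ∈ S, t b a) ∧ (∃ b ∈ S, t a b)

/-- A countable Markov shift (given by its matrix) is finitely primitive. -/
def FinPrimitiveT (t : ℕ → ℕ → Prop) : Prop :=
  ∃ (p : ℕ) (W : Finset (List ℕ)), (∀ w ∈ W, w.length = p ∧ WordAllowed t w) ∧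
    ∀ u v, WordAllowed t u → WordAllowed t v → ∃ w ∈ W, WordAllowed t (u ++ w ++ v)

/-- The one-block code induced by a map on symbols. -/
def oneBlock (φ : ℕ → ℕ) : FullShift → FullShift := fun x n => φ (x n)

/-- The word given by the first `n` symbols of `x`. -/
def prefixWord (x : FullShift) (n : ℕ) : List ℕ := List.ofFn (fun i : Fin n => x i.1)

/-- The number of allowable words of `X` mapping to the word `v` under the one-block code. -/
noncomputable def preCount (X : Set FullShift) (φ : ℕ → ℕ) (v : List ℕ) : ℕ :=
  Set.ncard {u : List ℕ | Allow X u ∧ u.map φ = v}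

/-- The sequence Φ = {log φ_n}, φ_n(y) = |π⁻¹(y₁…y_n)|. -/
noncomputable def phiSeq (X : Set FullShift) (φ : ℕ → ℕ) : ℕ → FullShift → ℝ :=
  fun n y => (preCount X φ (prefixWord y n) : ℝ)

variable (X : Set FullShift) (f : ℕ → FullShift → ℝ)

/-- Each function of the sequence is positive on `X`. -/
def SeqPos : Prop := ∀ n, 0 < n → ∀ x ∈ X, 0 < f n x

/-- Each function of the sequence is continuous on `X`. -/
def SeqCont : Prop := ∀ n, 0 < n → ContinuousOn (f n) X

/-- `sup {f_{|w|}(x) : x ∈ [w] ∩ X}`. -/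
noncomputable def supW (w : List ℕ) : ℝ := sSup (f w.length '' (X ∩ cyl w))

/-- `sup {log f_{|w|}(x) : x ∈ [w] ∩ X}`. -/
noncomputable def supLogW (w : List ℕ) : ℝ :=
  sSup ((fun x => Real.log (f w.length x)) '' (X ∩ cyl w))

/-- The `n`-th variation of the sequence is bounded by `M`. -/
def VarBddBy (n : ℕ) (M : ℝ) : Prop :=
  ∀ x ∈ X, ∀ y ∈ X, (∀ i < n, x i = y i) → f n x ≤ M * f n y

/-- Bowen sequence with constant `M`. -/
def BowenWith (M : ℝ) : Prop := ∀ n, 0 < n → VarBddBy X f n M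

/-- Bowen sequence. -/
def Bowen : Prop := ∃ M : ℝ, 0 < M ∧ BowenWith X f M

/-- Tempered variation with variation constants `Mseq`. -/
def TemperedWith (Mseq : ℕ → ℝ) : Prop :=
  (∀ n, 0 < n → 0 < Mseq n ∧ VarBddBy X f n (Mseq n)) ∧
  Tendsto (fun n : ℕ => Real.log (Mseq n) / (n : ℝ)) atTop (𝓝 0)

/-- Tempered variation. -/
def Tempered : Prop := ∃ Mseq : ℕ → ℝ, TemperedWith X f Mseq

/-- `F + C` is sub-additive: `f_{n+m}(x) ≤ e^C f_n(x) f_m(σ^n x)`. -/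
def SubAddWith (C : ℝ) : Prop :=
  ∀ n m, 0 < n → 0 < m → ∀ x ∈ X, f (n + m) x ≤ Real.exp C * (f n x * f m (shift^[n] x))

/-- Condition (C1). -/
def CondC1 : Prop := ∃ C : ℝ, 0 ≤ C ∧ SubAddWith X f C

/-- Almost-additivity with constant `C`. -/
def AlmostAddWith (C : ℝ) : Prop :=
  ∀ n m, 0 < n → 0 < m → ∀ x ∈ X,
    Real.exp (-C) * (f n x * f m (shift^[n] x)) ≤ f (n + m) x ∧
    f (n + m) x ≤ Real.exp C * (f n x * f m (shift^[n] x))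

/-- Almost-additive sequence. -/
def AlmostAdd : Prop := ∃ C : ℝ, 0 ≤ C ∧ AlmostAddWith X f C

/-- Condition (C2) with constants `D`, `p`. -/
def C2With (D : ℝ) (p : ℕ) : Prop :=
  ∀ u v : List ℕ, 0 < u.length → 0 < v.length → Allow X u → Allow X v →
    ∃ w : List ℕ, w.length ≤ p ∧ Allow X (u ++ w ++ v) ∧
      D * (supW X f u * supW X f v) ≤ supW X f (u ++ w ++ v)

/-- Condition (C2). -/
def CondC2 : Prop := ∃ D : ℝ, 0 < D ∧ ∃ p : ℕ, C2With X f D p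

/-- Condition (C2) with all connecting words of length exactly `p` (strong specification). -/
def C2StrongWith (D : ℝ) (p : ℕ) : Prop :=
  ∀ u v : List ℕ, 0 < u.length → 0 < v.length → Allow X u → Allow X v →
    ∃ w : List ℕ, w.length = p ∧ Allow X (u ++ w ++ v) ∧
      D * (supW X f u * supW X f v) ≤ supW X f (u ++ w ++ v)

/-- Condition (C3): a finite set `W` of connecting words realizing (C2). -/
def C3With (D : ℝ) (p : ℕ) (W : Finset (List ℕ)) : Prop :=
  (∀ w ∈ W, w.length ≤ p) ∧
  ∀ u v : List ℕ, 0 < u.length → 0 < v.length → Allow X u → Allow X v →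
    ∃ w ∈ W, Allow X (u ++ w ++ v) ∧
      D * (supW X f u * supW X f v) ≤ supW X f (u ++ w ++ v)

/-- Condition (C3). -/
def CondC3 : Prop := ∃ D : ℝ, 0 < D ∧ ∃ (p : ℕ) (W : Finset (List ℕ)), C3With X f D p W

/-- The constants `D_{n,m}` are subexponential in each variable. -/
def TemperedConsts (Dnm : ℕ → ℕ → ℝ) : Prop :=
  (∀ n m, 0 < Dnm n m) ∧
  (∀ m, Tendsto (fun n : ℕ => Real.log (Dnm n m) / (n : ℝ)) atTop (𝓝 0)) ∧
  (∀ n, Tendsto (fun m : ℕ => Real.log (Dnm n m) / (m : ℝ)) atTop (𝓝 0))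

/-- Condition (D2) with constants `D_{n,m}` and `p`. -/
def D2With (Dnm : ℕ → ℕ → ℝ) (p : ℕ) : Prop :=
  TemperedConsts Dnm ∧
  ∀ u v : List ℕ, 0 < u.length → 0 < v.length → Allow X u → Allow X v →
    ∃ w : List ℕ, w.length ≤ p ∧ Allow X (u ++ w ++ v) ∧
      Dnm u.length v.length * (supW X f u * supW X f v) ≤ supW X f (u ++ w ++ v)

/-- Condition (D2). -/
def CondD2 : Prop := ∃ (Dnm : ℕ → ℕ → ℝ) (p : ℕ), D2With X f Dnm p

/-- Condition (D2) with all connecting words of length exactly `p` (strong specification). -/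
def D2StrongWith (Dnm : ℕ → ℕ → ℝ) (p : ℕ) : Prop :=
  TemperedConsts Dnm ∧
  ∀ u v : List ℕ, 0 < u.length → 0 < v.length → Allow X u → Allow X v →
    ∃ w : List ℕ, w.length = p ∧ Allow X (u ++ w ++ v) ∧
      Dnm u.length v.length * (supW X f u * supW X f v) ≤ supW X f (u ++ w ++ v)

/-- Condition (D3): a finite set `W` of connecting words realizing (D2). -/
def D3With (Dnm : ℕ → ℕ → ℝ) (p : ℕ) (W : Finset (List ℕ)) : Prop :=
  TemperedConsts Dnm ∧ (∀ w ∈ W, w.length ≤ p) ∧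
  ∀ u v : List ℕ, 0 < u.length → 0 < v.length → Allow X u → Allow X v →
    ∃ w ∈ W, Allow X (u ++ w ++ v) ∧
      Dnm u.length v.length * (supW X f u * supW X f v) ≤ supW X f (u ++ w ++ v)

/-- Condition (D3). -/
def CondD3 : Prop := ∃ (Dnm : ℕ → ℕ → ℝ) (p : ℕ) (W : Finset (List ℕ)), D3With X f Dnm p W

/-- The partition function `Z_n(F)`. -/
noncomputable def Zn (n : ℕ) : ℝ≥0∞ :=
  ∑' w : {w : List ℕ // w.length = n ∧ Allow X w}, ENNReal.ofReal (supW X f w.1)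

/-- The topological pressure `P(F)`. -/
noncomputable def pressure : EReal :=
  limsup (fun n : ℕ => ((n : ℝ)⁻¹ : EReal) * ENNReal.log (Zn X f n)) atTop

/-- The Gurevich partition function `Z_n(F, a)` over periodic points starting at `a`. -/
noncomputable def ZG (a : ℕ) (n : ℕ) : ℝ≥0∞ :=
  ∑' x : {x : FullShift // x ∈ X ∧ shift^[n] x = x ∧ x 0 = a}, ENNReal.ofReal (f n x.1)

/-- The Gurevich pressure at the symbol `a`. -/
noncomputable def gurevich (a : ℕ) : EReal :=
  limsup (fun n : ℕ => ((n : ℝ)⁻¹ : EReal) * ENNReal.log (ZG X f a n)) atTop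

/-- Condition (P1) with explicit data. -/
def P1With (t : ℕ → ℕ → Prop) (l : ℕ → ℕ) (D₁ : ℝ) (p₁ : ℕ) : Prop :=
  0 < D₁ ∧ StrictMono l ∧
    ∀ n : ℕ, MatIrred t (l n) ∧ ∃ D, D₁ ≤ D ∧ ∃ p ≤ p₁, C2With (markovRestr t (l n)) f D p

/-- Condition (P1). -/
def P1 (t : ℕ → ℕ → Prop) : Prop := ∃ (l : ℕ → ℕ) (D₁ : ℝ) (p₁ : ℕ), P1With f t l D₁ p₁

/-- A `σ`-invariant Borel probability measure supported on `X`. -/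
def InvariantProb (μ : Measure FullShift) : Prop :=
  IsProbabilityMeasure μ ∧ μ X = 1 ∧ MeasurePreserving shift μ μ

/-- The entropy of the cylinder partition of length `n`. -/
noncomputable def entH (μ : Measure FullShift) (n : ℕ) : ℝ≥0∞ :=
  ∑' w : {w : List ℕ // w.length = n}, ENNReal.ofReal (Real.negMulLog (μ (cyl w.1)).toReal)

/-- The Kolmogorov–Sinai entropy of `μ` (computed along the generating cylinder partitions). -/
noncomputable def entropy (μ : Measure FullShift) : EReal :=
  limsup (fun n : ℕ => ((n : ℝ)⁻¹ : EReal) * ((entH μ n : ℝ≥0∞) : EReal)) atTop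

/-- The `EReal`-valued integral of `log g`. -/
noncomputable def elogInt (μ : Measure FullShift) (g : FullShift → ℝ) : EReal :=
  ((∫⁻ x, ENNReal.ofReal (Real.log (g x)) ∂μ : ℝ≥0∞) : EReal)
    - ((∫⁻ x, ENNReal.ofReal (-Real.log (g x)) ∂μ : ℝ≥0∞) : EReal)

/-- The averages `(1/n) ∫ log f_n dμ`. -/
noncomputable def lyapAvg (μ : Measure FullShift) (n : ℕ) : EReal :=
  ((n : ℝ)⁻¹ : EReal) * elogInt μ (f n)

/-- `lim_n (1/n) ∫ log f_n dμ = L`. -/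
def HasLyap (μ : Measure FullShift) (L : EReal) : Prop := Tendsto (lyapAvg f μ) atTop (𝓝 L)

/-- `limsup_n (1/n) ∫ log f_n dμ`. -/
noncomputable def lyapSup (μ : Measure FullShift) : EReal := limsup (lyapAvg f μ) atTop

/-- The supremum in the variational principle (limit version). -/
noncomputable def vpLim : EReal :=
  sSup {r : EReal | ∃ (μ : Measure FullShift) (L : EReal), InvariantProb X μ ∧
    HasLyap f μ L ∧ L ≠ ⊥ ∧ r = entropy μ + L}

/-- The supremum in the variational principle (limsup version). -/
noncomputable def vpLimsup : EReal :=
  sSup {r : EReal | ∃ μ : Measure FullShift, InvariantProb X μ ∧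
    lyapSup f μ ≠ ⊥ ∧ r = entropy μ + lyapSup f μ}

/-- `μ` is a Gibbs measure for the sequence `F`. -/
def IsGibbs (μ : Measure FullShift) : Prop :=
  ∃ C₀ P : ℝ, 0 < C₀ ∧ ∀ w : List ℕ, 0 < w.length → Allow X w → ∀ x ∈ X ∩ cyl w,
    ENNReal.ofReal (C₀⁻¹ * (Real.exp (-(w.length : ℝ) * P) * f w.length x)) ≤ μ (cyl w) ∧
    μ (cyl w) ≤ ENNReal.ofReal (C₀ * (Real.exp (-(w.length : ℝ) * P) * f w.length x))

/-- `μ` is an equilibrium measure for the sequence `F`. -/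
def IsEquilibrium (μ : Measure FullShift) : Prop :=
  InvariantProb X μ ∧ ∃ L : EReal, HasLyap f μ L ∧ pressure X f = entropy μ + L

/-- The `EReal`-valued sum of a real series. -/
noncomputable def esum (g : ℕ → ℝ) : EReal :=
  ((∑' i, ENNReal.ofReal (g i) : ℝ≥0∞) : EReal) - ((∑' i, ENNReal.ofReal (-g i) : ℝ≥0∞) : EReal)

/-- A sofic shift on a finite alphabet: the image of a finite-state Markov shift
under a one-block factor map. -/
def IsFinSofic (Y : Set FullShift) : Prop :=
  ∃ (s : ℕ → ℕ → Prop) (N : ℕ) (ψ : ℕ → ℕ), Y = oneBlock ψ '' markovRestr s N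

end CSS

namespace CSS

section Aux

variable {t : ℕ → ℕ → Prop} {φ : ℕ → ℕ} {Y : Set FullShift}

lemma shift_iter_apply (x : FullShift) (n k : ℕ) : shift^[n] x k = x (k + n) := by
  induction n generalizing x with
  | zero => rfl
  | succ n ih =>
    rw [Function.iterate_succ_apply, ih (shift x)]
    rfl

lemma mem_cyl_iff {x : FullShift} {w : List ℕ} :
    x ∈ cyl w ↔ ∀ i, ∀ h : i < w.length, x i = w[i] := by
  constructor
  · intro hx i h; exact hx ⟨i, h⟩
  · intro h i; exact h i.1 i.2

lemma cyl_append_left {x : FullShift} {u v : List ℕ} (hx : x ∈ cyl (u ++ v)) : x ∈ cyl u := by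
  rw [mem_cyl_iff] at hx ⊢
  intro i h
  have h' : i < (u ++ v).length := by simp; omega
  rw [hx i h', List.getElem_append_left h]

lemma cyl_append_shift {x : FullShift} {u v : List ℕ} (hx : x ∈ cyl (u ++ v)) :
    shift^[u.length] x ∈ cyl v := by
  rw [mem_cyl_iff] at hx ⊢
  intro i h
  have h' : u.length + i < (u ++ v).length := by simp; omega
  rw [shift_iter_apply, Nat.add_comm i u.length, hx _ h',
    List.getElem_append_right (Nat.le_add_right _ _)]
  congr 1
  omega

lemma cyl_map {x : FullShift} {u : List ℕ} (hx : x ∈ cyl u) :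
    oneBlock φ x ∈ cyl (u.map φ) := by
  rw [mem_cyl_iff] at hx ⊢
  intro i h
  have h' : i < u.length := by simpa using h
  rw [List.getElem_map]
  show φ (x i) = φ u[i]
  rw [hx i h']

lemma mem_cyl_prefixWord (x : FullShift) (n : ℕ) : x ∈ cyl (prefixWord x n) := by
  intro i
  show x i.1 = (prefixWord x n)[i.1]'i.2
  simp [prefixWord]

lemma prefixWord_eq_of_mem_cyl {x : FullShift} {u : List ℕ} (hx : x ∈ cyl u) :
    prefixWord x u.length = u := by
  apply List.ext_getElem (by simp [prefixWord])
  intro i h1 h2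
  simp only [prefixWord, List.getElem_ofFn]
  exact (mem_cyl_iff.mp hx) i h2

lemma prefixWord_append (x : FullShift) (n m : ℕ) :
    prefixWord x (n + m) = prefixWord x n ++ prefixWord (shift^[n] x) m := by
  apply List.ext_getElem (by simp [prefixWord])
  intro i h1 h2
  simp only [prefixWord, List.getElem_ofFn]
  rcases Nat.lt_or_ge i n with h | h
  · rw [List.getElem_append_left (by simpa [prefixWord] using h)]
    simp [prefixWord]
  · rw [List.getElem_append_right (by simpa [prefixWord] using h)]
    simp only [prefixWord, List.length_ofFn, List.getElem_ofFn]
    rw [shift_iter_apply]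
    congr 1
    omega

lemma prefixWord_map (x : FullShift) (n : ℕ) :
    (prefixWord x n).map φ = prefixWord (oneBlock φ x) n := by
  simp [prefixWord, List.map_ofFn]
  rfl

lemma markov_shift_iter {x : FullShift} (hx : x ∈ markov t) (n : ℕ) :
    shift^[n] x ∈ markov t := by
  intro m
  rw [shift_iter_apply, shift_iter_apply]
  have := hx (m + n)
  simpa [Nat.add_right_comm m n 1] using this

lemma allow_append_left {u v : List ℕ} (h : Allow (markov t) (u ++ v)) :
    Allow (markov t) u := by
  obtain ⟨x, hx, hc⟩ := h
  exact ⟨x, hx, cyl_append_left hc⟩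

lemma allow_append_right {u v : List ℕ} (h : Allow (markov t) (u ++ v)) :
    Allow (markov t) v := by
  obtain ⟨x, hx, hc⟩ := h
  exact ⟨shift^[u.length] x, markov_shift_iter hx _, cyl_append_shift hc⟩

/-- The set of allowable preimage words of a word. -/
def preSet (t : ℕ → ℕ → Prop) (φ : ℕ → ℕ) (v : List ℕ) : Set (List ℕ) :=
  {u | Allow (markov t) u ∧ u.map φ = v}

lemma preCount_eq_ncard (v : List ℕ) :
    preCount (markov t) φ v = (preSet t φ v).ncard := rfl

lemma premap_finite (hfib : ∀ i : ℕ, {j : ℕ | φ j = i}.Finite) (v : List ℕ) :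
    {l : List ℕ | l.map φ = v}.Finite := by
  induction v with
  | nil =>
    apply (Set.finite_singleton ([] : List ℕ)).subset
    intro l hl
    simpa using hl
  | cons a v ih =>
    apply (((hfib a).prod ih).image (fun q : ℕ × List ℕ => q.1 :: q.2)).subset
    intro l hl
    cases l with
    | nil => simp at hl
    | cons b l =>
      simp only [Set.mem_setOf_eq, List.map_cons, List.cons.injEq] at hl
      exact ⟨(b, l), ⟨hl.1, hl.2⟩, rfl⟩

lemma preSet_finite (hfib : ∀ i : ℕ, {j : ℕ | φ j = i}.Finite) (v : List ℕ) :
    (preSet t φ v).Finite :=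
  (premap_finite hfib v).subset fun _ h => h.2

lemma preSet_nonempty (hfib : ∀ i : ℕ, {j : ℕ | φ j = i}.Finite)
    (hsur : oneBlock φ '' markov t = Y) {u : List ℕ} (hu : Allow Y u) :
    (preSet t φ u).Nonempty := by
  obtain ⟨y, hy, hc⟩ := hu
  rw [← hsur] at hy
  obtain ⟨x, hx, rfl⟩ := hy
  refine ⟨prefixWord x u.length, ⟨x, hx, mem_cyl_prefixWord x _⟩, ?_⟩
  rw [prefixWord_map, prefixWord_eq_of_mem_cyl hc]

lemma preCount_pos (hfib : ∀ i : ℕ, {j : ℕ | φ j = i}.Finite)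
    (hsur : oneBlock φ '' markov t = Y) {u : List ℕ} (hu : Allow Y u) :
    0 < preCount (markov t) φ u := by
  rw [preCount_eq_ncard]
  exact (Set.ncard_pos (preSet_finite hfib u)).mpr (preSet_nonempty hfib hsur hu)

lemma preCount_append_le (hfib : ∀ i : ℕ, {j : ℕ | φ j = i}.Finite) (a b : List ℕ) :
    preCount (markov t) φ (a ++ b) ≤ preCount (markov t) φ a * preCount (markov t) φ b := by
  classical
  rw [preCount_eq_ncard, preCount_eq_ncard, preCount_eq_ncard,
    Set.ncard_eq_toFinset_card _ (preSet_finite hfib (a ++ b)),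
    Set.ncard_eq_toFinset_card _ (preSet_finite hfib a),
    Set.ncard_eq_toFinset_card _ (preSet_finite hfib b), ← Finset.card_product]
  apply Finset.card_le_card_of_injOn (fun l => (l.take a.length, l.drop a.length))
  · intro l hl
    rw [Finset.mem_coe, Set.Finite.mem_toFinset] at hl
    obtain ⟨hall, hmap⟩ := hl
    have hsplit : l = l.take a.length ++ l.drop a.length := (List.take_append_drop _ _).symm
    rw [Finset.mem_coe, Finset.mem_product, Set.Finite.mem_toFinset, Set.Finite.mem_toFinset]
    dsimp only
    constructor
    · refine ⟨allow_append_left (hsplit ▸ hall), ?_⟩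
      rw [List.map_take, hmap, List.take_left]
    · refine ⟨allow_append_right (hsplit ▸ hall), ?_⟩
      rw [List.map_drop, hmap, List.drop_left]
  · intro l1 _ l2 _ h
    simp only [Prod.mk.injEq] at h
    rw [← List.take_append_drop a.length l1, ← List.take_append_drop a.length l2, h.1, h.2]

lemma supW_phi (hfib : ∀ i : ℕ, {j : ℕ | φ j = i}.Finite) {u : List ℕ} (hu : Allow Y u) :
    supW Y (phiSeq (markov t) φ) u = (preCount (markov t) φ u : ℝ) := by
  obtain ⟨y0, hy0, hc0⟩ := hu
  have himg : (phiSeq (markov t) φ u.length '' (Y ∩ cyl u)) =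
      {(preCount (markov t) φ u : ℝ)} := by
    apply Set.eq_singleton_iff_unique_mem.mpr
    constructor
    · refine ⟨y0, ⟨hy0, hc0⟩, ?_⟩
      simp [phiSeq, prefixWord_eq_of_mem_cyl hc0]
    · rintro r ⟨y, ⟨_, hyc⟩, rfl⟩
      simp [phiSeq, prefixWord_eq_of_mem_cyl hyc]
  rw [supW, himg, csSup_singleton]

/-- The key pigeonhole lemma. -/
lemma key_pigeonhole (hfib : ∀ i : ℕ, {j : ℕ | φ j = i}.Finite)
    (hsur : oneBlock φ '' markov t = Y) (W₁ : Finset (List ℕ))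
    (hW₁ : ∀ u v, Allow (markov t) u → Allow (markov t) v →
      ∃ w ∈ W₁, Allow (markov t) (u ++ w ++ v))
    {u v : List ℕ} (hu : Allow Y u) (hv : Allow Y v) :
    ∃ w ∈ W₁, Allow Y (u ++ w.map φ ++ v) ∧
      preCount (markov t) φ u * preCount (markov t) φ v ≤
        W₁.card * preCount (markov t) φ (u ++ w.map φ ++ v) := by
  classical
  set S : Finset (List ℕ) := (preSet_finite hfib u).toFinset with hS
  set T : Finset (List ℕ) := (preSet_finite hfib v).toFinset with hT
  have hSmem : ∀ a ∈ S, Allow (markov t) a ∧ a.map φ = u := by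
    intro a ha; rwa [hS, Set.Finite.mem_toFinset] at ha
  have hTmem : ∀ b ∈ T, Allow (markov t) b ∧ b.map φ = v := by
    intro b hb; rwa [hT, Set.Finite.mem_toFinset] at hb
  have hSne : S.Nonempty := by
    obtain ⟨a, ha⟩ := preSet_nonempty hfib hsur hu
    exact ⟨a, by rwa [hS, Set.Finite.mem_toFinset]⟩
  have hTne : T.Nonempty := by
    obtain ⟨b, hb⟩ := preSet_nonempty hfib hsur hv
    exact ⟨b, by rwa [hT, Set.Finite.mem_toFinset]⟩
  -- choice of connecting word for each pair
  set g : List ℕ × List ℕ → List ℕ := fun q =>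
    if h : ∃ w ∈ W₁, Allow (markov t) (q.1 ++ w ++ q.2) then h.choose else [] with hg
  have hgspec : ∀ q ∈ S ×ˢ T, g q ∈ W₁ ∧ Allow (markov t) (q.1 ++ g q ++ q.2) := by
    intro q hq
    rw [Finset.mem_product] at hq
    have hex : ∃ w ∈ W₁, Allow (markov t) (q.1 ++ w ++ q.2) :=
      hW₁ q.1 q.2 (hSmem q.1 hq.1).1 (hTmem q.2 hq.2).1
    rw [hg]
    simp only [dif_pos hex]
    exact ⟨hex.choose_spec.1, hex.choose_spec.2⟩
  have hW₁ne : W₁.Nonempty := by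
    obtain ⟨a, ha⟩ := hSne
    obtain ⟨b, hb⟩ := hTne
    exact ⟨g (a, b), (hgspec (a, b) (Finset.mem_product.mpr ⟨ha, hb⟩)).1⟩
  -- pigeonhole: fibers of g
  have hmaps : ∀ q ∈ S ×ˢ T, g q ∈ W₁ := fun q hq => (hgspec q hq).1
  have hsum : (S ×ˢ T).card = ∑ w ∈ W₁, ((S ×ˢ T).filter (fun q => g q = w)).card :=
    Finset.card_eq_sum_card_fiberwise hmaps
  obtain ⟨w₀, hw₀, hmax⟩ := W₁.exists_max_image
    (fun w => ((S ×ˢ T).filter (fun q => g q = w)).card) hW₁ne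
  set F : Finset (List ℕ × List ℕ) := (S ×ˢ T).filter (fun q => g q = w₀) with hF
  have htotal : (S ×ˢ T).card ≤ W₁.card * F.card := by
    rw [hsum]
    calc ∑ w ∈ W₁, ((S ×ˢ T).filter (fun q => g q = w)).card
        ≤ W₁.card • F.card := Finset.sum_le_card_nsmul _ _ _ (fun w hw => hmax w hw)
      _ = W₁.card * F.card := by rw [smul_eq_mul]
  -- fiber injects into preimages of u ++ w₀.map φ ++ v
  have hFmem : ∀ q ∈ F, q.1 ++ w₀ ++ q.2 ∈ preSet t φ (u ++ w₀.map φ ++ v) := by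
    intro q hq
    rw [hF, Finset.mem_filter] at hq
    obtain ⟨hq1, hq2⟩ := hq
    have := hgspec q hq1
    rw [hq2] at this
    rw [Finset.mem_product] at hq1
    refine ⟨this.2, ?_⟩
    rw [List.map_append, List.map_append, (hSmem q.1 hq1.1).2, (hTmem q.2 hq1.2).2]
  have hFcard : F.card ≤ preCount (markov t) φ (u ++ w₀.map φ ++ v) := by
    rw [preCount_eq_ncard, Set.ncard_eq_toFinset_card _ (preSet_finite hfib _)]
    apply Finset.card_le_card_of_injOn (fun q => q.1 ++ w₀ ++ q.2)
    · intro q hq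
      rw [Finset.mem_coe, Set.Finite.mem_toFinset]
      exact hFmem q hq
    · intro q1 hq1 q2 hq2 h
      dsimp only at h
      rw [Finset.mem_coe, hF, Finset.mem_filter, Finset.mem_product] at hq1 hq2
      have e1 := (hSmem q1.1 hq1.1.1).2
      have e2 := (hSmem q2.1 hq2.1.1).2
      have hl1 : q1.1.length = q2.1.length := by
        have l1 := congrArg List.length e1
        have l2 := congrArg List.length e2
        simp only [List.length_map] at l1 l2
        omega
      rw [List.append_assoc, List.append_assoc] at h
      obtain ⟨h1, h2⟩ := List.append_inj h hl1
      have h3 := List.append_cancel_left h2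
      exact Prod.ext h1 h3
  -- F is nonempty, giving allowability
  have hFne : F.Nonempty := by
    rw [← Finset.card_pos]
    rcases Nat.eq_zero_or_pos F.card with h | h
    · exfalso
      rw [h, Nat.mul_zero] at htotal
      have h1 : 0 < (S ×ˢ T).card := by
        rw [Finset.card_product]
        exact Nat.mul_pos (Finset.card_pos.mpr hSne) (Finset.card_pos.mpr hTne)
      omega
    · exact h
  obtain ⟨q, hq⟩ := hFne
  have hall : Allow (markov t) (q.1 ++ w₀ ++ q.2) := (hFmem q hq).1
  have hmapeq : (q.1 ++ w₀ ++ q.2).map φ = u ++ w₀.map φ ++ v := (hFmem q hq).2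
  have hAY : Allow Y (u ++ w₀.map φ ++ v) := by
    obtain ⟨x, hx, hc⟩ := hall
    refine ⟨oneBlock φ x, ?_, ?_⟩
    · rw [← hsur]; exact ⟨x, hx, rfl⟩
    · rw [← hmapeq]; exact cyl_map hc
  refine ⟨w₀, hw₀, hAY, ?_⟩
  calc preCount (markov t) φ u * preCount (markov t) φ v
      = S.card * T.card := by
        rw [preCount_eq_ncard, preCount_eq_ncard,
          Set.ncard_eq_toFinset_card _ (preSet_finite hfib u),
          Set.ncard_eq_toFinset_card _ (preSet_finite hfib v)]
    _ = (S ×ˢ T).card := (Finset.card_product S T).symm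
    _ ≤ W₁.card * F.card := htotal
    _ ≤ W₁.card * preCount (markov t) φ (u ++ w₀.map φ ++ v) :=
        Nat.mul_le_mul_left _ hFcard

end Aux

/-- For a one-block factor map `π` with finite symbol fibers from a finitely
irreducible countable Markov shift `X` onto a subshift `Y`, the sequence
`Φ = {log φ_n}`, `φ_n(y) = |π⁻¹(y₁…y_n)|`, is a Bowen sequence on `Y` satisfying (C1), (C2)
and (C3); moreover, connecting words may be taken in `π(W₁)` with constant `1/|W₁|`. -/
theorem phiSeq_Bowen_C1_C2_C3 (t : ℕ → ℕ → Prop) (h0 : NoZeroRowCol t)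
    (Y : Set FullShift) (hY : IsSubshift Y)
    (φ : ℕ → ℕ) (hfib : ∀ i : ℕ, {j : ℕ | φ j = i}.Finite)
    (hsur : oneBlock φ '' markov t = Y)
    (p : ℕ) (W₁ : Finset (List ℕ))
    (hW₁ : (∀ w ∈ W₁, w.length ≤ p ∧ Allow (markov t) w) ∧
      ∀ u v, Allow (markov t) u → Allow (markov t) v →
        ∃ w ∈ W₁, Allow (markov t) (u ++ w ++ v)) :
    Bowen Y (phiSeq (markov t) φ) ∧
    CondC1 Y (phiSeq (markov t) φ) ∧ CondC2 Y (phiSeq (markov t) φ) ∧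
    CondC3 Y (phiSeq (markov t) φ) ∧
    ∀ u v : List ℕ, 0 < u.length → 0 < v.length → Allow Y u → Allow Y v →
      ∃ w' ∈ W₁.image (List.map φ), Allow Y (u ++ w' ++ v) ∧
        (W₁.card : ℝ)⁻¹ * ((preCount (markov t) φ u : ℝ) * (preCount (markov t) φ v : ℝ))
          ≤ (preCount (markov t) φ (u ++ w' ++ v) : ℝ) := by
  have hBowen : Bowen Y (phiSeq (markov t) φ) := by
    refine ⟨1, one_pos, fun n _ x _ y _ hagree => ?_⟩
    have : prefixWord x n = prefixWord y n :=
      congrArg List.ofFn (funext fun i => hagree i.1 i.2)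
    rw [one_mul, phiSeq, phiSeq, this]
  have hC1 : CondC1 Y (phiSeq (markov t) φ) := by
    refine ⟨0, le_refl 0, fun n m _ _ y _ => ?_⟩
    rw [Real.exp_zero, one_mul]
    have := preCount_append_le (t := t) hfib (prefixWord y n) (prefixWord (shift^[n] y) m)
    simp only [phiSeq, prefixWord_append]
    calc ((preCount (markov t) φ (prefixWord y n ++ prefixWord (shift^[n] y) m) : ℕ) : ℝ)
        ≤ ((preCount (markov t) φ (prefixWord y n) *
            preCount (markov t) φ (prefixWord (shift^[n] y) m) : ℕ) : ℝ) := by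
          exact_mod_cast this
      _ = _ := by push_cast; ring
  -- the moreover clause
  have hmore : ∀ u v : List ℕ, 0 < u.length → 0 < v.length → Allow Y u → Allow Y v →
      ∃ w' ∈ W₁.image (List.map φ), Allow Y (u ++ w' ++ v) ∧
        (W₁.card : ℝ)⁻¹ * ((preCount (markov t) φ u : ℝ) * (preCount (markov t) φ v : ℝ))
          ≤ (preCount (markov t) φ (u ++ w' ++ v) : ℝ) := by
    intro u v _ _ hu hv
    obtain ⟨w₀, hw₀, hAY, hineq⟩ := key_pigeonhole hfib hsur W₁ hW₁.2 hu hv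
    refine ⟨w₀.map φ, Finset.mem_image_of_mem _ hw₀, hAY, ?_⟩
    have hcard : (0 : ℝ) < W₁.card := by
      exact_mod_cast Finset.card_pos.mpr ⟨w₀, hw₀⟩
    rw [inv_mul_le_iff₀ hcard]
    exact_mod_cast hineq
  -- C3
  have hC3 : CondC3 Y (phiSeq (markov t) φ) := by
    refine ⟨((W₁.card : ℝ) + 1)⁻¹, by positivity, p, W₁.image (List.map φ), ?_, ?_⟩
    · intro w hw
      obtain ⟨w₀, hw₀, rfl⟩ := Finset.mem_image.mp hw
      simpa using (hW₁.1 w₀ hw₀).1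
    · intro u v hul hvl hu hv
      obtain ⟨w', hw', hAY, hineq⟩ := hmore u v hul hvl hu hv
      refine ⟨w', hw', hAY, ?_⟩
      rw [supW_phi hfib hu, supW_phi hfib hv, supW_phi hfib hAY]
      have hcardpos : (0 : ℝ) < W₁.card := by
        obtain ⟨w₀, hw₀, _⟩ := Finset.mem_image.mp hw'
        exact_mod_cast Finset.card_pos.mpr ⟨w₀, hw₀⟩
      calc ((W₁.card : ℝ) + 1)⁻¹ *
            ((preCount (markov t) φ u : ℝ) * (preCount (markov t) φ v : ℝ))
          ≤ (W₁.card : ℝ)⁻¹ *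
            ((preCount (markov t) φ u : ℝ) * (preCount (markov t) φ v : ℝ)) := by
            apply mul_le_mul_of_nonneg_right
            · exact inv_anti₀ hcardpos (by linarith)
            · positivity
        _ ≤ (preCount (markov t) φ (u ++ w' ++ v) : ℝ) := hineq
  -- C2 from C3
  have hC2 : CondC2 Y (phiSeq (markov t) φ) := by
    obtain ⟨D, hD, p', W, hWlen, hWspec⟩ := hC3
    refine ⟨D, hD, p', fun u v hul hvl hu hv => ?_⟩
    obtain ⟨w, hw, hAY, hineq⟩ := hWspec u v hul hvl hu hv
    exact ⟨w, hWlen w hw, hAY, hineq⟩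
  exact ⟨hBowen, hC1, hC2, hC3, hmore⟩

end CSS
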